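/- For every nonnegative integer L and every nonzero complex number q that is not a root of unity, Σ_{n≥0} (-1)^n q^{(3n²+n)/2} (q³;q³)_L/((q;q)_{L-2n}(q³;q³)_n) = Σ_{j=-L}^{L} q^{L-j} (L, j; j; q³)_2. -/

import Mathlib

/-- The finite q-Pochhammer symbol `(a;q)_n`. -/
noncomputable def qPoch (a q : ℂ) (n : ℕ) : ℂ :=
  ∏ j ∈ Finset.range n, (1 - a * q ^ j)

/-- The infinite q-Pochhammer symbol `(a;q)_∞`. -/
noncomputable def qPochInf (a q : ℂ) : ℂ :=
  ∏' j : ℕ, (1 - a * q ^ j)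

/-- `1/(q;q)_n` for an integer `n`, with the convention that it is `0` for `n < 0`. -/
noncomputable def qPochInvZ (q : ℂ) (n : ℤ) : ℂ :=
  if 0 ≤ n then (qPoch q q n.toNat)⁻¹ else 0

/-- The q-trinomial coefficient `(L, b; a; q)_2`. -/
noncomputable def qTrinomial (L : ℕ) (b a : ℤ) (q : ℂ) : ℂ :=
  ∑' n : ℕ, q ^ ((n : ℤ) * ((n : ℤ) + b)) * qPoch q q L * qPochInvZ q (n : ℤ) *
    qPochInvZ q ((n : ℤ) + a) * qPochInvZ q ((L : ℤ) - 2 * (n : ℤ) - a)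

/-- The q-trinomial coefficient `T_n(L, a; q)`, where `s` is a fixed square root of `q`. -/
noncomputable def qTriT (n : ℤ) (L : ℕ) (a : ℤ) (q s : ℂ) : ℂ :=
  s ^ ((L : ℤ) * ((L : ℤ) - n) - a * (a - n)) * qTrinomial L (a - n) a q⁻¹

/-- The Gaussian (q-binomial) coefficient `[N choose k]_q`, zero unless `0 ≤ k ≤ N`. -/
noncomputable def qBinom (N k : ℤ) (q : ℂ) : ℂ :=
  if 0 ≤ k ∧ k ≤ N then
    qPoch q q N.toNat * (qPoch q q k.toNat)⁻¹ * (qPoch q q (N - k).toNat)⁻¹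
  else 0

/-- The quadratic form `Q(m,n) = 2m² + 6mn + 6n²` from Capparelli's theorems. -/
def Qcap (m n : ℕ) : ℕ := 2 * m ^ 2 + 6 * m * n + 6 * n ^ 2

/-!
Divide both sides by `(q³;q³)_L` and pass to generating functions in `x`. Write
`e(x) = ∑ xⁿ/(q³;q³)ₙ = 1/(x;q³)_∞` and `F(y) = ∑ (-1)ⁿ q^{n(3n+1)/2} yⁿ/(q³;q³)ₙ`.
The left side becomes `F(x²)/(x;q)_∞`; substituting `k = n + j`, the right side becomes
`G(x) e(qx)` with `G(x) = ∑_{m,k} q^{2m+3mk} x^{m+k}/((q³;q³)_m (q³;q³)_k)`.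
Since `q` is not a root of unity, `1/(x;q)_∞` is the only series `f` with `f(0) = 1` and
`f(qx) = (1 - x) f(x)`, which gives `1/(x;q)_∞ = e(x) e(qx) e(q²x)`. In `G`, summing over `k`
first gives `e(q^{3m} x) = (x;q³)_m e(x)`, and expanding `(x;q³)_m` by Rothe's q-binomial
theorem turns `∑_m q^{2m} xᵐ (x;q³)_m/(q³;q³)_m` into `F(x²) e(q²x)`. Hence both sides equal
`F(x²) e(x) e(qx) e(q²x)`.
-/

open PowerSeries Finset

section QPochhammer

variable {Q : ℂ}

@[simp]
theorem qPoch_zero (a Q : ℂ) : qPoch a Q 0 = 1 :=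
  prod_range_zero _

theorem qPoch_succ (a Q : ℂ) (n : ℕ) : qPoch a Q (n + 1) = qPoch a Q n * (1 - a * Q ^ n) :=
  prod_range_succ _ _

theorem qPoch_self_succ (Q : ℂ) (n : ℕ) : qPoch Q Q (n + 1) = qPoch Q Q n * (1 - Q ^ (n + 1)) := by
  rw [qPoch_succ, ← pow_succ']

theorem one_sub_pow_ne_zero (hQ : ∀ k, 0 < k → Q ^ k ≠ 1) {k : ℕ} (hk : 0 < k) : 1 - Q ^ k ≠ 0 :=
  sub_ne_zero.2 (hQ k hk).symm

theorem qPoch_self_ne_zero (hQ : ∀ k, 0 < k → Q ^ k ≠ 1) (n : ℕ) : qPoch Q Q n ≠ 0 := by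
  induction n with
  | zero => simp
  | succ n ih => exact qPoch_self_succ Q n ▸ mul_ne_zero ih (one_sub_pow_ne_zero hQ n.succ_pos)

theorem pow_pow_ne_one (hQ : ∀ k, 0 < k → Q ^ k ≠ 1) {d : ℕ} (hd : 0 < d) :
    ∀ k, 0 < k → (Q ^ d) ^ k ≠ 1 := fun k hk => by
  rw [← pow_mul]; exact hQ _ (Nat.mul_pos hd hk)

theorem qPochInvZ_natCast (Q : ℂ) (n : ℕ) : qPochInvZ Q n = (qPoch Q Q n)⁻¹ := by
  rw [qPochInvZ, if_pos n.cast_nonneg, Int.toNat_natCast]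

theorem qPochInvZ_of_neg (Q : ℂ) {z : ℤ} (hz : z < 0) : qPochInvZ Q z = 0 :=
  if_neg hz.not_ge

theorem qBinom_natCast (Q : ℂ) (m i : ℕ) :
    qBinom m i Q = if i ≤ m then qPoch Q Q m * (qPoch Q Q i)⁻¹ * (qPoch Q Q (m - i))⁻¹ else 0 := by
  simp only [qBinom, Nat.cast_nonneg, true_and, Nat.cast_le, Int.toNat_natCast]
  split_ifs with h
  · rw [← Nat.cast_sub h, Int.toNat_natCast]
  · rfl

theorem qBinom_succ_succ (hQ : ∀ k, 0 < k → Q ^ k ≠ 1) (m i : ℕ) :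
    qBinom (m + 1 : ℕ) (i + 1 : ℕ) Q = Q ^ (i + 1) * qBinom m (i + 1 : ℕ) Q + qBinom m i Q := by
  simp only [qBinom_natCast]
  obtain hlt | rfl | hgt := lt_trichotomy i m
  · obtain ⟨t, rfl⟩ := Nat.exists_eq_add_of_lt hlt
    simp only [show i + 1 ≤ i + t + 1 + 1 by omega, show i + 1 ≤ i + t + 1 by omega,
      show i ≤ i + t + 1 by omega, if_true, show i + t + 1 + 1 - (i + 1) = t + 1 by omega,
      show i + t + 1 - (i + 1) = t by omega, show i + t + 1 - i = t + 1 by omega]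
    have h := qPoch_self_ne_zero hQ
    rw [qPoch_self_succ Q (i + t + 1), qPoch_self_succ Q t, qPoch_self_succ Q i]
    have h1 := one_sub_pow_ne_zero hQ (k := t + 1) (by omega)
    have h2 := one_sub_pow_ne_zero hQ (k := i + 1) (by omega)
    field_simp [h (i + t + 1), h i, h t]
    ring
  · simp [mul_inv_cancel₀ (qPoch_self_ne_zero hQ _)]
  · simp [show ¬ i + 1 ≤ m + 1 by omega, show ¬ i + 1 ≤ m by omega, show ¬ i ≤ m by omega]

theorem qTrinomial_eq_sum_range (L : ℕ) (b a : ℤ) (Q : ℂ) :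
    qTrinomial L b a Q = ∑ n ∈ range (L + 1), Q ^ ((n : ℤ) * ((n : ℤ) + b)) * qPoch Q Q L *
      qPochInvZ Q (n : ℤ) * qPochInvZ Q ((n : ℤ) + a) *
        qPochInvZ Q ((L : ℤ) - 2 * (n : ℤ) - a) := by
  refine tsum_eq_sum fun n hn => ?_
  rw [mem_range] at hn
  rcases lt_or_ge ((n : ℤ) + a) 0 with h | h
  · simp [qPochInvZ_of_neg Q h]
  · simp [qPochInvZ_of_neg Q (show (L : ℤ) - 2 * n - a < 0 by omega)]

end QPochhammer

namespace PowerSeries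

theorem eq_of_rescale_eq_one_sub_X_mul {K : Type*} [Field K] {c : K}
    (hc : ∀ k, 0 < k → c ^ k ≠ 1) {F G : K⟦X⟧} (hF : rescale c F = (1 - X) * F)
    (hG : rescale c G = (1 - X) * G) (h₀ : constantCoeff F = constantCoeff G) : F = G := by
  have step : ∀ {H : K⟦X⟧}, rescale c H = (1 - X) * H →
      ∀ n, coeff (n + 1) H = coeff n H / (1 - c ^ (n + 1)) := fun {H} hH n => by
    have h := congrArg (coeff (n + 1)) hH
    rw [coeff_rescale, sub_mul, one_mul, map_sub, coeff_succ_X_mul] at h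
    rw [eq_div_iff (sub_ne_zero.2 (hc (n + 1) (by omega)).symm)]
    linear_combination -h
  ext n
  induction n with
  | zero => simpa using h₀
  | succ n ih => rw [step hF, step hG, ih]

theorem coeff_expand_mul_eq_sum_range {R : Type*} [CommRing R] (p : ℕ) (hp : p ≠ 0)
    (f g : R⟦X⟧) (n : ℕ) :
    coeff n (expand p hp f * g) = ∑ i ∈ range (n / p + 1), coeff i f * coeff (n - p * i) g := by
  rw [coeff_mul, Nat.sum_antidiagonal_eq_sum_range_succ_mk]
  simp only [coeff_expand, ite_mul, zero_mul]
  rw [← sum_filter]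
  symm
  refine sum_nbij' (p * ·) (· / p) ?_ ?_ ?_ ?_ ?_
  · intro i hi
    simp only [mem_range, mem_filter] at hi ⊢
    have := Nat.mul_le_of_le_div p i n (by omega)
    exact ⟨by rw [mul_comm]; omega, dvd_mul_right p i⟩
  · intro k hk
    simp only [mem_range, mem_filter] at hk ⊢
    have := Nat.div_le_div_right (c := p) (Nat.le_of_lt_succ hk.1)
    omega
  · intro i _
    exact Nat.mul_div_cancel_left i (Nat.pos_of_ne_zero hp)
  · intro k hk
    simp only [mem_filter] at hk
    exact Nat.mul_div_cancel' hk.2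
  · intro i _
    rw [Nat.mul_div_cancel_left i (Nat.pos_of_ne_zero hp)]

@[simp]
theorem rescale_C {R : Type*} [CommSemiring R] (a c : R) : rescale a (C c) = C c := by
  ext n
  rcases n with _ | n <;> simp [coeff_C]

@[simp]
theorem constantCoeff_rescale {R : Type*} [CommSemiring R] (a : R) (f : R⟦X⟧) :
    constantCoeff (rescale a f) = constantCoeff f := by
  rw [← coeff_zero_eq_constantCoeff_apply, coeff_rescale, pow_zero, one_mul,
    coeff_zero_eq_constantCoeff_apply]

end PowerSeries

theorem Finset.Nat.sum_antidiagonal_sum_antidiagonal {M : Type*} [AddCommMonoid M]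
    (f : ℕ → ℕ → ℕ → M) (n : ℕ) :
    ∑ p ∈ antidiagonal n, ∑ q ∈ antidiagonal p.1, f q.1 q.2 p.2 =
      ∑ p ∈ antidiagonal n, ∑ q ∈ antidiagonal p.2, f p.1 q.1 q.2 := by
  simp only [sum_sigma']
  apply sum_nbij' (fun ⟨⟨_, c⟩, ⟨a, b⟩⟩ ↦ ⟨(a, b + c), (b, c)⟩)
    (fun ⟨⟨a, _⟩, ⟨b, c⟩⟩ ↦ ⟨(a + b, c), (a, b)⟩) <;> aesop (add simp [add_assoc])

theorem Finset.sum_Icc_int_eq_sum_range {M : Type*} [AddCommMonoid M] {f : ℤ → M} {a b c : ℤ}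
    {N : ℕ} (hac : a ≤ c) (hcb : c + N ≤ b) (hf : ∀ j ∈ Icc a b, f j ≠ 0 → c ≤ j ∧ j ≤ c + N) :
    ∑ j ∈ Icc a b, f j = ∑ k ∈ range (N + 1), f (c + k) := by
  rw [← sum_subset (Icc_subset_Icc hac hcb) fun j hj hj' => by_contra fun h => hj' <| by
    simpa using hf j hj h, Int.Icc_eq_finset_map, sum_map,
    show (c + N + 1 - c).toNat = N + 1 by omega]
  rfl

section QSeries

variable {Q : ℂ}

noncomputable def qExpSeries (Q : ℂ) : ℂ⟦X⟧ := mk fun n => (qPoch Q Q n)⁻¹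

noncomputable def qPochSeries (Q : ℂ) (m : ℕ) : ℂ⟦X⟧ := ∏ j ∈ range m, (1 - C (Q ^ j) * X)

@[simp]
theorem coeff_qExpSeries (Q : ℂ) (n : ℕ) : coeff n (qExpSeries Q) = (qPoch Q Q n)⁻¹ :=
  coeff_mk _ _

@[simp]
theorem constantCoeff_qExpSeries (Q : ℂ) : constantCoeff (qExpSeries Q) = 1 := by
  rw [← coeff_zero_eq_constantCoeff_apply, coeff_qExpSeries, qPoch_zero, inv_one]

theorem rescale_qExpSeries (hQ : ∀ k, 0 < k → Q ^ k ≠ 1) :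
    rescale Q (qExpSeries Q) = (1 - X) * qExpSeries Q := by
  ext n
  rw [sub_mul, one_mul, map_sub, coeff_rescale]
  cases n with
  | zero => simp
  | succ n =>
    rw [coeff_succ_X_mul, coeff_qExpSeries, coeff_qExpSeries, qPoch_self_succ]
    have := one_sub_pow_ne_zero hQ (k := n + 1) (by omega)
    field_simp [qPoch_self_ne_zero hQ n]
    ring

theorem qPochSeries_succ (Q : ℂ) (m : ℕ) :
    qPochSeries Q (m + 1) = (1 - X) * rescale Q (qPochSeries Q m) := by
  rw [qPochSeries, qPochSeries, prod_range_succ', map_prod, mul_comm]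
  congr 1
  · simp
  · refine prod_congr rfl fun j _ => ?_
    rw [map_sub, map_one, map_mul, rescale_C, rescale_X, pow_succ, map_mul]
    ring

theorem rescale_pow_qExpSeries (hQ : ∀ k, 0 < k → Q ^ k ≠ 1) (m : ℕ) :
    rescale (Q ^ m) (qExpSeries Q) = qPochSeries Q m * qExpSeries Q := by
  induction m with
  | zero => simp [qPochSeries]
  | succ m ih =>
    rw [pow_succ, ← rescale_rescale, ih, map_mul, rescale_qExpSeries hQ, qPochSeries_succ]
    ring

/-- The finite q-binomial theorem (Rothe). -/
theorem coeff_qPochSeries (hQ : ∀ k, 0 < k → Q ^ k ≠ 1) (m i : ℕ) :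
    coeff i (qPochSeries Q m) = (-1) ^ i * Q ^ i.choose 2 * qBinom m i Q := by
  induction m generalizing i with
  | zero => rw [qBinom_natCast]; cases i <;> simp [qPochSeries, coeff_one]
  | succ m ih =>
    rw [qPochSeries_succ, sub_mul, one_mul, map_sub]
    cases i with
    | zero =>
      rw [coeff_zero_X_mul, coeff_rescale, ih, qBinom_natCast, qBinom_natCast]
      simp [mul_inv_cancel₀ (qPoch_self_ne_zero hQ _)]
    | succ i =>
      rw [coeff_succ_X_mul, coeff_rescale, coeff_rescale, ih, ih, qBinom_succ_succ hQ,
        Nat.choose_succ_succ', Nat.choose_one_right]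
      ring

theorem qExpSeries_eq_mul_rescale {q : ℂ} (hq : ∀ k, 0 < k → q ^ k ≠ 1) :
    qExpSeries q = qExpSeries (q ^ 3) * rescale q (qExpSeries (q ^ 3)) *
      rescale (q ^ 2) (qExpSeries (q ^ 3)) := by
  refine eq_of_rescale_eq_one_sub_X_mul hq (rescale_qExpSeries hq) ?_ (by simp)
  rw [map_mul, map_mul, rescale_rescale, rescale_rescale, ← sq, ← pow_succ,
    rescale_qExpSeries (pow_pow_ne_one hq (by norm_num))]
  ring

end QSeries

namespace Capparelli

variable {q : ℂ}

noncomputable def pentagonalSeries (q : ℂ) : ℂ⟦X⟧ :=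
  mk fun n => (-1) ^ n * q ^ ((3 * n ^ 2 + n) / 2) * (qPoch (q ^ 3) (q ^ 3) n)⁻¹

noncomputable def doubleSeries (q : ℂ) : ℂ⟦X⟧ :=
  mk fun N => ∑ p ∈ antidiagonal N, q ^ (2 * p.1) * (qPoch (q ^ 3) (q ^ 3) p.1)⁻¹ *
    ((q ^ 3) ^ (p.1 * p.2) * (qPoch (q ^ 3) (q ^ 3) p.2)⁻¹)

theorem pentagonal_exponent (n : ℕ) : (3 * n ^ 2 + n) / 2 = 2 * n + 3 * n.choose 2 := by
  induction n with
  | zero => rfl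
  | succ n ih =>
    have h : (n + 1).choose 2 = n.choose 2 + n := by
      simp only [Nat.choose_two_right, Nat.triangle_succ]
    rw [h, show 3 * (n + 1) ^ 2 + (n + 1) = 3 * n ^ 2 + n + 2 * (3 * n + 2) by ring]
    omega

theorem coeff_expand_pentagonalSeries_mul (hq : ∀ k, 0 < k → q ^ k ≠ 1) (s : ℕ) :
    coeff s (expand 2 two_ne_zero (pentagonalSeries q) * rescale (q ^ 2) (qExpSeries (q ^ 3))) =
      ∑ p ∈ antidiagonal s, q ^ (2 * p.1) * (qPoch (q ^ 3) (q ^ 3) p.1)⁻¹ *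
        coeff p.2 (qPochSeries (q ^ 3) p.1) := by
  have hQ := pow_pow_ne_one hq (d := 3) (by norm_num)
  rw [coeff_expand_mul_eq_sum_range, ← Nat.sum_antidiagonal_swap,
    Nat.sum_antidiagonal_eq_sum_range_succ_mk,
    ← sum_subset (range_subset_range.2 (show s / 2 + 1 ≤ s + 1 by omega)) fun i hi hi' => ?_]
  · refine sum_congr rfl fun i hi => ?_
    have h2i : 2 * i ≤ s := by simp only [mem_range] at hi; omega
    simp only [Prod.swap, pentagonalSeries, coeff_mk, coeff_rescale, coeff_qExpSeries,
      coeff_qPochSeries hQ, qBinom_natCast, if_pos (show i ≤ s - i by omega),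
      show s - i - i = s - 2 * i by omega, pentagonal_exponent]
    field_simp [qPoch_self_ne_zero hQ]
    rw [← pow_mul, ← pow_mul, ← pow_add, ← pow_add]
    congr 1
    omega
  · simp only [mem_range] at hi hi'
    simp [coeff_qPochSeries hQ, qBinom_natCast, show ¬ i ≤ s - i by omega]

theorem doubleSeries_eq (hq : ∀ k, 0 < k → q ^ k ≠ 1) :
    doubleSeries q = expand 2 two_ne_zero (pentagonalSeries q) *
      rescale (q ^ 2) (qExpSeries (q ^ 3)) * qExpSeries (q ^ 3) := by
  have hQ := pow_pow_ne_one hq (d := 3) (by norm_num)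
  have coeff_rescale_pow (m k : ℕ) : (q ^ 3) ^ (m * k) * (qPoch (q ^ 3) (q ^ 3) k)⁻¹ =
      coeff k (qPochSeries (q ^ 3) m * qExpSeries (q ^ 3)) := by
    rw [← rescale_pow_qExpSeries hQ, coeff_rescale, coeff_qExpSeries, pow_mul]
  ext N
  rw [doubleSeries, coeff_mk, coeff_mul]
  simp only [coeff_rescale_pow, coeff_expand_pentagonalSeries_mul hq, coeff_mul, mul_sum,
    sum_mul, mul_assoc]
  exact (Nat.sum_antidiagonal_sum_antidiagonal (fun m i r => q ^ (2 * m) *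
    ((qPoch (q ^ 3) (q ^ 3) m)⁻¹ *
      (coeff i (qPochSeries (q ^ 3) m) * coeff r (qExpSeries (q ^ 3))))) N).symm

theorem expand_pentagonalSeries_mul_qExpSeries (hq : ∀ k, 0 < k → q ^ k ≠ 1) :
    expand 2 two_ne_zero (pentagonalSeries q) * qExpSeries q =
      doubleSeries q * rescale q (qExpSeries (q ^ 3)) := by
  rw [qExpSeries_eq_mul_rescale hq, doubleSeries_eq hq]
  ring

theorem tsum_eq_qPoch_mul_coeff (L : ℕ) :
    (∑' n : ℕ, (-1 : ℂ) ^ n * q ^ ((3 * n ^ 2 + n) / 2) * qPoch (q ^ 3) (q ^ 3) L *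
        qPochInvZ q ((L : ℤ) - 2 * n) * (qPoch (q ^ 3) (q ^ 3) n)⁻¹) =
      qPoch (q ^ 3) (q ^ 3) L *
        coeff L (expand 2 two_ne_zero (pentagonalSeries q) * qExpSeries q) := by
  rw [coeff_expand_mul_eq_sum_range, mul_sum, tsum_eq_sum (s := range (L / 2 + 1)) fun n hn => ?_]
  · refine sum_congr rfl fun n hn => ?_
    rw [mem_range] at hn
    rw [show (L : ℤ) - 2 * n = ((L - 2 * n : ℕ) : ℤ) by omega, qPochInvZ_natCast,
      pentagonalSeries, coeff_mk, coeff_qExpSeries]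
    ring
  · rw [mem_range] at hn
    rw [qPochInvZ_of_neg q (by omega), mul_zero, zero_mul]

theorem sum_trinomial_eq_qPoch_mul_coeff (L : ℕ) :
    ∑ j ∈ Icc (-(L : ℤ)) L, q ^ ((L : ℤ) - j) * qTrinomial L j j (q ^ 3) =
      qPoch (q ^ 3) (q ^ 3) L * coeff L (doubleSeries q * rescale q (qExpSeries (q ^ 3))) := by
  simp only [qTrinomial_eq_sum_range, mul_sum]
  rw [sum_comm, coeff_mul, doubleSeries]
  simp only [coeff_mk, coeff_rescale, coeff_qExpSeries, sum_mul, mul_sum]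
  rw [Nat.sum_antidiagonal_sum_antidiagonal (fun m k r => qPoch (q ^ 3) (q ^ 3) L *
    (q ^ (2 * m) * (qPoch (q ^ 3) (q ^ 3) m)⁻¹ * ((q ^ 3) ^ (m * k) * (qPoch (q ^ 3) (q ^ 3) k)⁻¹) *
      (q ^ r * (qPoch (q ^ 3) (q ^ 3) r)⁻¹))), Nat.sum_antidiagonal_eq_sum_range_succ_mk]
  refine sum_congr rfl fun n hn => ?_
  rw [mem_range] at hn
  rw [Nat.sum_antidiagonal_eq_sum_range_succ_mk, sum_Icc_int_eq_sum_range (c := -n) (N := L - n)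
    (by omega) (by omega) fun j _ hj => ?_]
  · refine sum_congr rfl fun k hk => ?_
    simp only [mem_range] at hk
    rw [show (L : ℤ) - (-n + k) = ((2 * n + (L - n - k) : ℕ) : ℤ) by omega,
      show (n : ℤ) * (n + (-n + k)) = ((n * k : ℕ) : ℤ) by push_cast; ring,
      show (n : ℤ) + (-n + k) = k by ring,
      show (L : ℤ) - 2 * n - (-n + k) = ((L - n - k : ℕ) : ℤ) by omega]
    simp only [zpow_natCast, qPochInvZ_natCast, pow_add]
    ring
  · by_contra h
    refine hj ?_
    rcases lt_or_ge ((n : ℤ) + j) 0 with h' | h'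
    · simp [qPochInvZ_of_neg _ h']
    · simp [qPochInvZ_of_neg _ (show (L : ℤ) - 2 * n - j < 0 by omega)]

end Capparelli

theorem capparelli_third_pair_general (L : ℕ) (q : ℂ) (hroot : ∀ k : ℕ, 0 < k → q ^ k ≠ 1) :
    (∑' n : ℕ, (-1 : ℂ) ^ n * q ^ ((3 * n ^ 2 + n) / 2) * qPoch (q ^ 3) (q ^ 3) L *
        qPochInvZ q ((L : ℤ) - 2 * n) * (qPoch (q ^ 3) (q ^ 3) n)⁻¹) =
    ∑ j ∈ Finset.Icc (-(L : ℤ)) (L : ℤ),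
      q ^ ((L : ℤ) - j) * qTrinomial L j j (q ^ 3) := by
  rw [Capparelli.tsum_eq_qPoch_mul_coeff, Capparelli.sum_trinomial_eq_qPoch_mul_coeff,
    Capparelli.expand_pentagonalSeries_mul_qExpSeries hroot]

theorem capparelli_third_pair (L : ℕ) (q : ℂ) (hq : q ≠ 0) (hroot : ∀ k : ℕ, 0 < k → q ^ k ≠ 1) :
    (∑' n : ℕ, (-1 : ℂ) ^ n * q ^ ((3 * n ^ 2 + n) / 2) * qPoch (q ^ 3) (q ^ 3) L *
        qPochInvZ q ((L : ℤ) - 2 * n) * (qPoch (q ^ 3) (q ^ 3) n)⁻¹) =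
    ∑ j ∈ Finset.Icc (-(L : ℤ)) (L : ℤ),
      q ^ ((L : ℤ) - j) * qTrinomial L j j (q ^ 3) :=
  capparelli_third_pair_general L q hroot
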